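/- Let N be a sorting network with n levels and m commutators. Then the flip graph G(N) is (m − n(n−1)/2)-regular and connected. -/

import Mathlib

open Finset
open scoped Classical Pointwise

namespace BrickP

/-! ### Networks and pseudoline arrangements

A network with `n` levels (labeled `0,…,n-1` from bottom to top) and `m` commutators
(labeled `0,…,m-1` from left to right) is encoded by a word `N : Fin m → Fin (n-1)`:
the `j`-th commutator joins levels `(N j).1` and `(N j).1 + 1`.
A pseudoline arrangement supported by `N` is encoded by its set `C` of crossings:
the word of adjacent transpositions read at the positions of `C` must be a reduced
expression of the longest element `w₀` of the symmetric group, i.e. its product is `w₀`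
and its length is `n.choose 2`.  The contacts are the commutators not in `C`. -/

/-- The adjacent transposition of `Fin n` exchanging the levels `i` and `i+1`. -/
def adjT (n : ℕ) (i : Fin (n - 1)) : Equiv.Perm (Fin n) :=
  Equiv.swap ⟨i.1, by have := i.2; omega⟩ ⟨i.1 + 1, by have := i.2; omega⟩

/-- The longest element of the symmetric group on `Fin n`: the order-reversing permutation. -/
def w0 (n : ℕ) : Equiv.Perm (Fin n) := Fin.revPerm

/-- `C` is the crossing set of a pseudoline arrangement supported by the network `N`. -/
def IsArr (n : ℕ) {m : ℕ} (N : Fin m → Fin (n - 1)) (C : Finset (Fin m)) : Prop :=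
  C.card = n.choose 2 ∧
    (((List.finRange m).filter (fun j => j ∈ C)).map (fun j => adjT n (N j))).prod = w0 n

instance (n : ℕ) {m : ℕ} (N : Fin m → Fin (n - 1)) : DecidablePred (IsArr n N) := fun C => by
  unfold IsArr; infer_instance

/-- `statePerm n N C t i` is the level occupied by the `i`-th pseudoline of the arrangement
with crossing set `C` after the first `t` commutators of the network `N`. -/
def statePerm (n : ℕ) {m : ℕ} (N : Fin m → Fin (n - 1)) (C : Finset (Fin m)) :
    ℕ → Equiv.Perm (Fin n)
  | 0 => 1
  | t + 1 =>
    (if h : t < m then (if (⟨t, h⟩ : Fin m) ∈ C then adjT n (N ⟨t, h⟩) else 1) else 1) *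
      statePerm n N C t

/-- The `j`-th commutator has another commutator at the same level gap to its right;
the brick of the network associated to `j` is the bounded cell whose left wall is `j`. -/
def IsBrick {n m : ℕ} (N : Fin m → Fin (n - 1)) (j : Fin m) : Prop :=
  ∃ j' : Fin m, j < j' ∧ N j' = N j

instance {n m : ℕ} (N : Fin m → Fin (n - 1)) : DecidablePred (IsBrick N) := fun j => by
  unfold IsBrick; infer_instance

/-- The `i`-th pseudoline of the arrangement `C` passes above the brick with left wall `j`
(equivalently, above the commutator `j`). -/
def Above (n : ℕ) {m : ℕ} (N : Fin m → Fin (n - 1)) (C : Finset (Fin m))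
    (i : Fin n) (j : Fin m) : Prop :=
  (N j).1 < (statePerm n N C (j.1 + 1) i).1

instance (n : ℕ) {m : ℕ} (N : Fin m → Fin (n - 1)) (C : Finset (Fin m)) (i : Fin n) (j : Fin m) :
    Decidable (Above n N C i j) := by unfold Above; infer_instance

/-- The brick vector of an arrangement: its `i`-th coordinate is the number of bricks of the
network lying below the `i`-th pseudoline. -/
noncomputable def brickVector (n : ℕ) {m : ℕ} (N : Fin m → Fin (n - 1)) (C : Finset (Fin m)) :
    Fin n → ℝ :=
  fun i => ((univ.filter (fun j : Fin m => IsBrick N j ∧ Above n N C i j)).card : ℝ)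

/-- The brick polytope of a network: the convex hull of the brick vectors of all pseudoline
arrangements supported by it. -/
noncomputable def brickPolytope (n : ℕ) {m : ℕ} (N : Fin m → Fin (n - 1)) : Set (Fin n → ℝ) :=
  convexHull ℝ {x | ∃ C, IsArr n N C ∧ brickVector n N C = x}

/-! ### The contact graph -/

/-- The source of the arc of the contact graph associated to the contact `j`:
the pseudoline passing above the contact. -/
def arcSrc (n : ℕ) {m : ℕ} (N : Fin m → Fin (n - 1)) (C : Finset (Fin m)) (j : Fin m) : Fin n :=
  (statePerm n N C (j.1 + 1))⁻¹ ⟨(N j).1 + 1, by have := (N j).2; omega⟩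

/-- The target of the arc of the contact graph associated to the contact `j`:
the pseudoline passing below the contact. -/
def arcTgt (n : ℕ) {m : ℕ} (N : Fin m → Fin (n - 1)) (C : Finset (Fin m)) (j : Fin m) : Fin n :=
  (statePerm n N C (j.1 + 1))⁻¹ ⟨(N j).1, by have := (N j).2; omega⟩

/-- The contact graph of an arrangement, as the multiset of its arcs (a directed multigraph
on the vertex set `Fin n`). -/
def contactMG (n : ℕ) {m : ℕ} (N : Fin m → Fin (n - 1)) (C : Finset (Fin m)) :
    Multiset (Fin n × Fin n) :=
  (univ.filter (fun j : Fin m => j ∉ C)).val.map (fun j => (arcSrc n N C j, arcTgt n N C j))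

/-- There is an arc from `a` to `b` in the contact graph of the arrangement `C`. -/
def ArcRel (n : ℕ) {m : ℕ} (N : Fin m → Fin (n - 1)) (C : Finset (Fin m)) (a b : Fin n) : Prop :=
  ∃ j : Fin m, j ∉ C ∧ arcSrc n N C j = a ∧ arcTgt n N C j = b

/-- `a` and `b` lie in the same connected component of the contact graph of `C`. -/
def ConnRel (n : ℕ) {m : ℕ} (N : Fin m → Fin (n - 1)) (C : Finset (Fin m)) (a b : Fin n) : Prop :=
  Relation.ReflTransGen (fun u v => ArcRel n N C u v ∨ ArcRel n N C v u) a b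

/-- A network is irreducible when the contact graphs of all supported arrangements
are connected. -/
def Irreducible (n : ℕ) {m : ℕ} (N : Fin m → Fin (n - 1)) : Prop :=
  ∀ C, IsArr n N C → ∀ a b : Fin n, ConnRel n N C a b

/-- The contact graph of the arrangement `C` is an acyclic directed multigraph. -/
def AcyclicArcs (n : ℕ) {m : ℕ} (N : Fin m → Fin (n - 1)) (C : Finset (Fin m)) : Prop :=
  ∀ a : Fin n, ¬ Relation.TransGen (ArcRel n N C) a a

/-! ### Polyhedral notions -/

/-- Dimension of a subset of `ℝⁿ`: the rank of the direction of its affine span. -/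
noncomputable def dimOf {n : ℕ} (s : Set (Fin n → ℝ)) : ℕ :=
  Module.finrank ℝ (affineSpan ℝ s).direction

/-- The cone positively spanned by a set of vectors. -/
def coneOf {n : ℕ} (S : Set (Fin n → ℝ)) : Set (Fin n → ℝ) :=
  {x | ∃ (k : ℕ) (c : Fin k → ℝ) (v : Fin k → Fin n → ℝ),
      (∀ i, 0 ≤ c i) ∧ (∀ i, v i ∈ S) ∧ x = ∑ i, c i • v i}

/-- Standard scalar product on `Fin n → ℝ`. -/
def dotp {n : ℕ} (u x : Fin n → ℝ) : ℝ := ∑ i, u i * x i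

/-- The face of `P` minimizing the linear form `⟨u, ·⟩`. -/
def minFace {n : ℕ} (P : Set (Fin n → ℝ)) (u : Fin n → ℝ) : Set (Fin n → ℝ) :=
  {x | x ∈ P ∧ ∀ y ∈ P, dotp u x ≤ dotp u y}

/-- `u` is a normal vector of a facet of `P` (facet = face of codimension 1), with the
convention that the facet is the subset of `P` minimizing `⟨u, ·⟩`. -/
def IsFacetNormal {n : ℕ} (P : Set (Fin n → ℝ)) (u : Fin n → ℝ) : Prop :=
  u ≠ 0 ∧ (minFace P u).Nonempty ∧ dimOf (minFace P u) + 1 = dimOf P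

/-- `F` is a nonempty face of dimension `k` of the convex set `P`. -/
def IsKFace {n : ℕ} (P : Set (Fin n → ℝ)) (k : ℕ) (F : Set (Fin n → ℝ)) : Prop :=
  IsExtreme ℝ P F ∧ Convex ℝ F ∧ F.Nonempty ∧ dimOf F = k

/-- The characteristic vector of a subset of coordinates. -/
def charVec {n : ℕ} (V : Finset (Fin n)) : Fin n → ℝ := fun i => if i ∈ V then 1 else 0

/-! ### Directed cuts -/

/-- The arcs of the contact graph of `C` crossing the vertex partition `(Vᶜ, V)`. -/
def cutArcs (n : ℕ) {m : ℕ} (N : Fin m → Fin (n - 1)) (C : Finset (Fin m)) (V : Finset (Fin n)) :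
    Set (Fin n × Fin n) :=
  {p | ArcRel n N C p.1 p.2 ∧ ((p.1 ∈ V ∧ p.2 ∉ V) ∨ (p.1 ∉ V ∧ p.2 ∈ V))}

/-- `(Vᶜ, V)` is a minimal directed cut of the contact graph of `C`, with sink set `V`:
all crossing arcs are directed towards `V` and the set of crossing arcs is
inclusion-minimal among edge cuts. -/
def MinDirCut (n : ℕ) {m : ℕ} (N : Fin m → Fin (n - 1)) (C : Finset (Fin m))
    (V : Finset (Fin n)) : Prop :=
  V.Nonempty ∧ V ≠ univ ∧ (∀ a b, ArcRel n N C a b → ¬(a ∈ V ∧ b ∉ V)) ∧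
    ∀ W : Finset (Fin n), W.Nonempty → W ≠ univ →
      cutArcs n N C W ⊆ cutArcs n N C V → cutArcs n N C W = cutArcs n N C V

/-! ### The simplicial complex `Δ(N)` and the face maps `Φ`, `Ψ` -/

/-- `γ` is a face of the simplicial complex `Δ(N)`: the network obtained by erasing the
commutators of `γ` is still sorting, i.e. some supported arrangement has all of `γ`
among its contacts. -/
def IsFaceOfCplx (n : ℕ) {m : ℕ} (N : Fin m → Fin (n - 1)) (γ : Finset (Fin m)) : Prop :=
  ∃ C, IsArr n N C ∧ Disjoint γ C

/-- `Φ` associates to `X ⊆ ℝⁿ` the set of commutators of `N` which are contacts in all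
supported arrangements whose brick vector lies in `X`. -/
def PhiMap (n : ℕ) {m : ℕ} (N : Fin m → Fin (n - 1)) (X : Set (Fin n → ℝ)) : Set (Fin m) :=
  {j | ∀ C, IsArr n N C → brickVector n N C ∈ X → j ∉ C}

/-- `Ψ` associates to a set `γ` of commutators of `N` the convex hull of the brick vectors
of the arrangements of `Arr(N|γ)`, i.e. whose contacts contain `γ`. -/
noncomputable def PsiMap (n : ℕ) {m : ℕ} (N : Fin m → Fin (n - 1)) (γ : Set (Fin m)) :
    Set (Fin n → ℝ) :=
  convexHull ℝ {x | ∃ C, IsArr n N C ∧ (∀ j ∈ γ, j ∉ C) ∧ brickVector n N C = x}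

/-- Same component relation in the contact graph of `C` with the arcs of `γ` removed. -/
def ConnRelAvoid (n : ℕ) {m : ℕ} (N : Fin m → Fin (n - 1)) (C : Finset (Fin m))
    (γ : Set (Fin m)) (a b : Fin n) : Prop :=
  Relation.ReflTransGen
    (fun u v =>
      (∃ j : Fin m, j ∉ C ∧ j ∉ γ ∧ arcSrc n N C j = u ∧ arcTgt n N C j = v) ∨
      (∃ j : Fin m, j ∉ C ∧ j ∉ γ ∧ arcSrc n N C j = v ∧ arcTgt n N C j = u)) a b

/-- One step of the quotient multigraph `Λ^#/(Λ^#∖γ^#)`: an arc of `γ^#` between the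
components of `a` and `b` in `Λ^#∖γ^#`. -/
def QStep (n : ℕ) {m : ℕ} (N : Fin m → Fin (n - 1)) (C : Finset (Fin m)) (γ : Set (Fin m))
    (a b : Fin n) : Prop :=
  ∃ a' b' : Fin n, ConnRelAvoid n N C γ a a' ∧
    (∃ j : Fin m, j ∉ C ∧ j ∈ γ ∧ arcSrc n N C j = a' ∧ arcTgt n N C j = b') ∧
    ConnRelAvoid n N C γ b' b

/-- A set `γ` of commutators of `N` is `k`-admissible. -/
def KAdmissible (n : ℕ) {m : ℕ} (N : Fin m → Fin (n - 1)) (γ : Set (Fin m)) (k : ℕ) : Prop :=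
  ∃ C, IsArr n N C ∧ (∀ j ∈ γ, j ∉ C) ∧
    {S : Set (Fin n) | ∃ a, S = {b | ConnRelAvoid n N C γ a b}}.ncard = n - k ∧
    ∀ a, ¬ Relation.TransGen (QStep n N C γ) a a

/-! ### Restrictions of networks -/

/-- The pseudoline of the arrangement `C` entering the commutator `j` from below. -/
def pLow (n : ℕ) {m : ℕ} (N : Fin m → Fin (n - 1)) (C : Finset (Fin m)) (j : Fin m) : Fin n :=
  (statePerm n N C j.1)⁻¹ ⟨(N j).1, by have := (N j).2; omega⟩

/-- The pseudoline of the arrangement `C` entering the commutator `j` from above. -/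
def pHigh (n : ℕ) {m : ℕ} (N : Fin m → Fin (n - 1)) (C : Finset (Fin m)) (j : Fin m) : Fin n :=
  (statePerm n N C j.1)⁻¹ ⟨(N j).1 + 1, by have := (N j).2; omega⟩

/-- `U` is a connected component of the contact graph of the arrangement `C`. -/
def IsComp (n : ℕ) {m : ℕ} (N : Fin m → Fin (n - 1)) (C : Finset (Fin m))
    (U : Finset (Fin n)) : Prop :=
  ∃ a : Fin n, U = univ.filter (fun b => ConnRel n N C a b)

/-- The commutators of `N` whose two incident pseudolines (w.r.t. the arrangement `C`)
both belong to `U`. -/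
def commsIn (n : ℕ) {m : ℕ} (N : Fin m → Fin (n - 1)) (C : Finset (Fin m))
    (U : Finset (Fin n)) : Finset (Fin m) :=
  univ.filter (fun j => pLow n N C j ∈ U ∧ pHigh n N C j ∈ U)

/-- The restriction of the network `N` to the curves of the pseudolines of `U`
(w.r.t. the arrangement `C`): it has `U.card` levels, its commutators are those of
`commsIn n N C U` in left-right order, and the level of such a commutator is the number
of curves of `U` passing below it. -/
noncomputable def restNet (n : ℕ) {m : ℕ} (N : Fin m → Fin (n - 1)) (C : Finset (Fin m))
    (U : Finset (Fin n)) (j' : Fin (commsIn n N C U).card) : Fin (U.card - 1) := by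
  refine ⟨(U.filter (fun u =>
      (statePerm n N C (((commsIn n N C U).orderIsoOfFin rfl j').1).1 u).1 <
        (N ((commsIn n N C U).orderIsoOfFin rfl j').1).1)).card, ?_⟩
  set j : Fin m := ((commsIn n N C U).orderIsoOfFin rfl j').1 with hj
  have hmem : j ∈ commsIn n N C U := ((commsIn n N C U).orderIsoOfFin rfl j').2
  rw [commsIn, Finset.mem_filter] at hmem
  obtain ⟨-, hL, hH⟩ := hmem
  have hlowlvl : (statePerm n N C j.1 (pLow n N C j)).1 = (N j).1 := by
    unfold pLow; rw [Equiv.Perm.inv_def, Equiv.apply_symm_apply]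
  have hhighlvl : (statePerm n N C j.1 (pHigh n N C j)).1 = (N j).1 + 1 := by
    unfold pHigh; rw [Equiv.Perm.inv_def, Equiv.apply_symm_apply]
  have hne : pLow n N C j ≠ pHigh n N C j := by
    intro h; rw [h, hhighlvl] at hlowlvl; omega
  have hsub : U.filter (fun u => (statePerm n N C j.1 u).1 < (N j).1)
      ⊆ (U.erase (pLow n N C j)).erase (pHigh n N C j) := by
    intro u hu
    rw [Finset.mem_filter] at hu
    rw [Finset.mem_erase, Finset.mem_erase]
    refine ⟨fun h => ?_, fun h => ?_, hu.1⟩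
    · rw [h] at hu; omega
    · rw [h] at hu; omega
  have hcard := Finset.card_le_card hsub
  rw [Finset.card_erase_of_mem (Finset.mem_erase.mpr ⟨hne.symm, hH⟩),
    Finset.card_erase_of_mem hL] at hcard
  have hU2 : 2 ≤ U.card := Finset.one_lt_card.mpr ⟨_, hL, _, hH, hne⟩
  omega

/-- The indices, in the restricted network, of the commutators of `γ` belonging to the
restriction. -/
def restIdx (n : ℕ) {m : ℕ} (N : Fin m → Fin (n - 1)) (C : Finset (Fin m)) (U : Finset (Fin n))
    (γ : Finset (Fin m)) : Finset (Fin (commsIn n N C U).card) :=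
  univ.filter (fun j' => ((commsIn n N C U).orderIsoOfFin rfl j').1 ∈ γ)


/-! ### Kernels of networks, alternating networks, and the polygon of a word -/

/-- The commutators of `N` surviving in the `k`-kernel of `N` (obtained by erasing the
first `k` and last `k` levels together with all commutators incident to them). -/
def kernelComms (n : ℕ) {m : ℕ} (N : Fin m → Fin (n - 1)) (k : ℕ) : Finset (Fin m) :=
  univ.filter (fun j => k ≤ (N j).1 ∧ (N j).1 + k < n - 1)

/-- The `k`-kernel of the network `N`: a network with `n - 2k` levels. -/
def kernelNet (n : ℕ) {m : ℕ} (N : Fin m → Fin (n - 1)) (k : ℕ) :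
    Fin (kernelComms n N k).card → Fin (n - 2 * k - 1) :=
  fun j' => ⟨(N ((kernelComms n N k).orderIsoOfFin rfl j').1).1 - k, by
    have h := ((kernelComms n N k).orderIsoOfFin rfl j').2
    have h2 := (Finset.mem_filter.mp h).2
    omega⟩

/-- The commutator `j` is adjacent to the level `ℓ`. -/
def Touches {n m : ℕ} (N : Fin m → Fin (n - 1)) (ℓ : ℕ) (j : Fin m) : Prop :=
  (N j).1 = ℓ ∨ (N j).1 + 1 = ℓ

/-- The network `N` is alternating: the commutators adjacent to each intermediate level are
alternatively located above and below it. -/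
def IsAlternating {n m : ℕ} (N : Fin m → Fin (n - 1)) : Prop :=
  ∀ ℓ : ℕ, 0 < ℓ → ℓ + 1 < n → ∀ j j' : Fin m, j < j' →
    Touches N ℓ j → Touches N ℓ j' → (∀ j'', j < j'' → j'' < j' → ¬ Touches N ℓ j'') →
    N j ≠ N j'

/-- The `i`-th pseudoline of the arrangement `C` touches the level `ℓ` somewhere. -/
def TouchesLevel (n : ℕ) {m : ℕ} (N : Fin m → Fin (n - 1)) (C : Finset (Fin m))
    (i : Fin n) (ℓ : ℕ) : Prop :=
  ∃ t, t ≤ m ∧ (statePerm n N C t i).1 = ℓ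

/-- `M` is the reduced alternating sorting network `N_x` associated to the word
`x ∈ {a,b}^{n-2}` (where `a` is encoded by `true` and `b` by `false`): it is reduced
(it has `n.choose 2` commutators, all of which are crossings of its unique supported
pseudoline arrangement), alternating, and for each `i` its `(i+1)`-st pseudoline touches
the top level if `x i = a` and the bottom level if `x i = b`. -/
def IsNetworkOfWord (n : ℕ) {m : ℕ} (M : Fin m → Fin (n - 1)) (x : Fin (n - 2) → Bool) : Prop :=
  m = n.choose 2 ∧ IsArr n M Finset.univ ∧ IsAlternating M ∧
    ∀ i : Fin (n - 2),
      (x i = true →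
        TouchesLevel n M Finset.univ ⟨i.1 + 1, by have := i.2; omega⟩ (n - 1)) ∧
      (x i = false →
        TouchesLevel n M Finset.univ ⟨i.1 + 1, by have := i.2; omega⟩ 0)

/-- The position of the vertex `v` of the polygon `P_x` in the cyclic (counterclockwise)
order along the boundary of `P_x`: first `p_1`, then the vertices below the horizontal
axis from left to right, then `p_n`, then the vertices above the axis from right to left. -/
def cpos (n : ℕ) (x : Fin (n - 2) → Bool) (v : Fin n) : ℕ :=
  if v.1 = 0 then 0
  else if v.1 = n - 1 then (univ.filter (fun i : Fin (n - 2) => x i = false)).card + 1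
  else if h : v.1 = 0 ∨ v.1 = n - 1 then 0
  else if x ⟨v.1 - 1, by have := v.2; omega⟩ = false then
    (univ.filter (fun i : Fin (n - 2) => i.1 < v.1 - 1 ∧ x i = false)).card + 1
  else
    (univ.filter (fun i : Fin (n - 2) => x i = false)).card + 2 +
      (univ.filter (fun i : Fin (n - 2) => v.1 - 1 < i.1 ∧ x i = true)).card

/-- `c` lies strictly between `a` and `b`. -/
def Btw (a b c : ℕ) : Prop := min a b < c ∧ c < max a b

/-- The diagonals `d` and `e` of the polygon `P_x` cross (in their interior): exactly one
endpoint of `e` lies on each side of `d`. -/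
def CrossesIn (n : ℕ) (x : Fin (n - 2) → Bool) (d e : Fin n × Fin n) : Prop :=
  (Btw (cpos n x d.1) (cpos n x d.2) (cpos n x e.1) ∧
      ¬ Btw (cpos n x d.1) (cpos n x d.2) (cpos n x e.2)) ∨
  (¬ Btw (cpos n x d.1) (cpos n x d.2) (cpos n x e.1) ∧
      Btw (cpos n x d.1) (cpos n x d.2) (cpos n x e.2))

/-- `d` is an internal diagonal of the polygon `P_x`: its endpoints are distinct and
non-consecutive on the boundary. -/
def IsInternal (n : ℕ) (x : Fin (n - 2) → Bool) (d : Fin n × Fin n) : Prop :=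
  d.1 ≠ d.2 ∧ (cpos n x d.1 + 1) % n ≠ cpos n x d.2 ∧ (cpos n x d.2 + 1) % n ≠ cpos n x d.1

/-- The label of the commutator `j` of a reduced network: the pair of indices of the two
pseudolines of the unique supported arrangement which cross at `j` (smallest first). -/
def commLabel (n : ℕ) {m : ℕ} (M : Fin m → Fin (n - 1)) (j : Fin m) : Fin n × Fin n :=
  (pLow n M Finset.univ j, pHigh n M Finset.univ j)

/-! ### Multitriangulations: valid sequences and the sets `D(σ)` -/

/-- The sequence `0^k σ 0^k ∈ {0,1}^n` obtained by appending `k` zeros before and after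
`σ ∈ {0,1}^(n-2k)` (`1` is encoded by `true` and `0` by `false`). -/
def extSeq (n k : ℕ) (σ : Fin (n - 2 * k) → Bool) (t : Fin n) : Bool :=
  if h : k ≤ t.1 ∧ t.1 < k + (n - 2 * k) then σ ⟨t.1 - k, by omega⟩ else false

/-- The positions of the zeros of the extended sequence `0^k σ 0^k`. -/
def zeroSet (n k : ℕ) (σ : Fin (n - 2 * k) → Bool) : Finset (Fin n) :=
  univ.filter (fun t => extSeq n k σ t = false)

/-- The set `D(σ)` of edges `[ζ_i(σ), ζ_{i+k}(σ)]` of the `n`-gon, where `ζ_i(σ)` denotes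
the position of the `i`-th zero of `0^k σ 0^k`. -/
def DsetP (n k : ℕ) (σ : Fin (n - 2 * k) → Bool) (p : Fin n × Fin n) : Prop :=
  ∃ i : Fin (zeroSet n k σ).card, ∃ hik : i.1 + k < (zeroSet n k σ).card,
    p = (((zeroSet n k σ).orderIsoOfFin rfl i).1,
         ((zeroSet n k σ).orderIsoOfFin rfl ⟨i.1 + k, hik⟩).1)

/-- A sequence of `{0,1}^q` is `k`-valid if it is neither `0^q` nor `1^q` and contains no
factor `1 0^r 1` with `r ≥ k`. -/
def KValid (q k : ℕ) (σ : Fin q → Bool) : Prop :=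
  (∃ i, σ i = true) ∧ (∃ i, σ i = false) ∧
    ¬ ∃ i j : Fin q, i < j ∧ σ i = true ∧ σ j = true ∧
        (∀ t, i < t → t < j → σ t = false) ∧ k ≤ j.1 - i.1 - 1

/-! ### The simplicial complex `Δ_n^k` of multitriangulations -/

/-- `p` encodes a `k`-relevant diagonal of a convex `q`-gon with vertices `0,…,q-1` in
cyclic order: it has at least `k` vertices of the polygon (strictly) on each side. -/
def IsRelevantDiag (q k : ℕ) (p : Fin q × Fin q) : Prop :=
  p.1.1 < p.2.1 ∧ p.1.1 + k + 1 ≤ p.2.1 ∧ k + p.2.1 + 1 ≤ q + p.1.1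

/-- Two diagonals of the convex `q`-gon cross. -/
def DiagCross {q : ℕ} (p e : Fin q × Fin q) : Prop :=
  (p.1.1 < e.1.1 ∧ e.1.1 < p.2.1 ∧ p.2.1 < e.2.1) ∨
  (e.1.1 < p.1.1 ∧ p.1.1 < e.2.1 ∧ e.2.1 < p.2.1)

/-- `γ` is a face of the simplicial complex `Δ_q^k`: a `(k+1)`-crossing-free set of
`k`-relevant diagonals of the convex `q`-gon. -/
def IsFaceDelta (q k : ℕ) (γ : Finset (Fin q × Fin q)) : Prop :=
  (∀ p ∈ γ, IsRelevantDiag q k p) ∧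
    ∀ S ⊆ γ, S.card = k + 1 → ¬ (∀ p ∈ S, ∀ e ∈ S, p ≠ e → DiagCross p e)


/-- The flip graph of the network `N`: its vertices are the pseudoline arrangements
supported by `N` and its edges are the flips (two arrangements related by a flip have
crossing sets, equivalently contact sets, differing in exactly one element each). -/
def flipGraph (n : ℕ) {m : ℕ} (N : Fin m → Fin (n - 1)) :
    SimpleGraph {C : Finset (Fin m) // IsArr n N C} where
  Adj C C' := (symmDiff C.1 C'.1).card = 2
  symm := ⟨fun C C' h => by
    show (symmDiff C'.1 C.1).card = 2; rw [symmDiff_comm]; exact h⟩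
  loopless := ⟨fun C h => by simp [symmDiff_self] at h⟩

instance (n : ℕ) {m : ℕ} (N : Fin m → Fin (n - 1)) : DecidableRel (flipGraph n N).Adj :=
  fun C C' => inferInstanceAs (Decidable ((symmDiff C.1 C'.1).card = 2))

/-! Two pseudolines of an arrangement cross exactly once: every pair has to cross for the order
of the pseudolines to be reversed, and there are only `n.choose 2` crossings. Toggling the
commutator `t` multiplies the final permutation on the right by the transposition of the two
pseudolines meeting at `t`, so `C ∆ {v, w}` is again an arrangement iff exactly one of `v, w` is
a contact and the same two pseudolines meet at `v` and at `w`. Hence every contact admits exactly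
one flip, which gives the degree `m - n.choose 2`. For connectivity, flip one arrangement at the
leftmost commutator where it differs from the other: the crossing removed lies further right, so
the two arrangements then agree on a longer prefix. -/

def letter (n : ℕ) {m : ℕ} (N : Fin m → Fin (n - 1)) (C : Finset (Fin m)) (t : ℕ) :
    Equiv.Perm (Fin n) :=
  if h : t < m then (if (⟨t, h⟩ : Fin m) ∈ C then adjT n (N ⟨t, h⟩) else 1) else 1

def crossingSwap (n : ℕ) {m : ℕ} (N : Fin m → Fin (n - 1)) (C : Finset (Fin m)) (t : Fin m) :
    Equiv.Perm (Fin n) :=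
  Equiv.swap (pLow n N C t) (pHigh n N C t)

section Flips

variable {n m : ℕ} {N : Fin m → Fin (n - 1)} {C C' : Finset (Fin m)}

theorem statePerm_succ (C : Finset (Fin m)) (t : ℕ) :
    statePerm n N C (t + 1) = letter n N C t * statePerm n N C t := rfl

theorem letter_of_mem {t : Fin m} (ht : t ∈ C) : letter n N C t = adjT n (N t) := by
  simp [letter, ht]

theorem letter_of_notMem {t : Fin m} (ht : t ∉ C) : letter n N C t = 1 := by
  simp [letter, ht]

theorem letter_congr {t : ℕ}
    (h : ∀ ht : t < m, (⟨t, ht⟩ : Fin m) ∈ C ↔ (⟨t, ht⟩ : Fin m) ∈ C') :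
    letter n N C t = letter n N C' t := by
  unfold letter
  split_ifs with ht <;> simp_all

theorem adjT_mul_self (i : Fin (n - 1)) : adjT n i * adjT n i = 1 :=
  Equiv.swap_mul_self _ _

theorem letter_inv (C : Finset (Fin m)) (t : ℕ) : (letter n N C t)⁻¹ = letter n N C t := by
  refine inv_eq_of_mul_eq_one_right ?_
  unfold letter
  split_ifs <;> simp [adjT_mul_self]

theorem statePerm_inv_eq_prod (C : Finset (Fin m)) (T : ℕ) :
    (statePerm n N C T)⁻¹ = ((List.range T).map (letter n N C)).prod := by
  induction T with
  | zero => rfl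
  | succ T ih =>
    rw [statePerm_succ, mul_inv_rev, ih, letter_inv, List.range_succ, List.map_append,
      List.prod_append, List.map_singleton, List.prod_singleton]

theorem prod_map_letter (C : Finset (Fin m)) (l : List (Fin m)) :
    (l.map (fun j : Fin m => letter n N C j.1)).prod =
      ((l.filter (· ∈ C)).map (fun j => adjT n (N j))).prod := by
  induction l with
  | nil => rfl
  | cons j l ih => by_cases hj : j ∈ C <;> simp [hj, letter_of_mem, letter_of_notMem, ih]

theorem w0_inv : (w0 n)⁻¹ = w0 n := Fin.revPerm_symm

theorem isArr_iff :
    IsArr n N C ↔ C.card = n.choose 2 ∧ statePerm n N C m = w0 n := by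
  have hprod : (statePerm n N C m)⁻¹ =
      (((List.finRange m).filter (· ∈ C)).map (fun j => adjT n (N j))).prod := by
    rw [statePerm_inv_eq_prod, ← List.map_coe_finRange_eq_range, List.map_map]
    exact prod_map_letter C _
  rw [IsArr, ← hprod, inv_eq_iff_eq_inv, w0_inv]

theorem statePerm_congr {T : ℕ} (h : ∀ t : Fin m, t.1 < T → (t ∈ C ↔ t ∈ C')) :
    statePerm n N C T = statePerm n N C' T := by
  induction T with
  | zero => rfl
  | succ T ih =>
    rw [statePerm_succ, statePerm_succ, ih fun t ht => h t (by omega),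
      letter_congr fun hT => h ⟨T, hT⟩ (by simp)]

theorem statePerm_pLow (C : Finset (Fin m)) (t : Fin m) :
    statePerm n N C t (pLow n N C t) = ⟨(N t).1, by omega⟩ :=
  Equiv.apply_symm_apply _ _

theorem statePerm_pHigh (C : Finset (Fin m)) (t : Fin m) :
    statePerm n N C t (pHigh n N C t) = ⟨(N t).1 + 1, by omega⟩ :=
  Equiv.apply_symm_apply _ _

theorem pLow_ne_pHigh (C : Finset (Fin m)) (t : Fin m) : pLow n N C t ≠ pHigh n N C t := by
  intro h
  have := statePerm_pHigh (N := N) C t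
  rw [← h, statePerm_pLow, Fin.mk.injEq] at this
  exact Nat.succ_ne_self _ this.symm

theorem crossingSwap_eq (C : Finset (Fin m)) (t : Fin m) :
    crossingSwap n N C t = (statePerm n N C t)⁻¹ * adjT n (N t) * statePerm n N C t := by
  rw [crossingSwap, pLow, pHigh, Equiv.swap_apply_apply, inv_inv]
  rfl

theorem crossingSwap_inv (C : Finset (Fin m)) (t : Fin m) :
    (crossingSwap n N C t)⁻¹ = crossingSwap n N C t :=
  Equiv.swap_inv _ _

theorem crossingSwap_congr {t : Fin m} (h : ∀ s < t, s ∈ C ↔ s ∈ C') :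
    crossingSwap n N C t = crossingSwap n N C' t := by
  rw [crossingSwap_eq, crossingSwap_eq, statePerm_congr h]

theorem adjT_apply_val (i : Fin (n - 1)) (x : Fin n) :
    (adjT n i x).1 = if x.1 = i.1 then i.1 + 1 else if x.1 = i.1 + 1 then i.1 else x.1 := by
  unfold adjT
  rw [Equiv.swap_apply_def]
  split_ifs <;> simp_all [Fin.ext_iff]

theorem adjT_lt_adjT_iff {i : Fin (n - 1)} {u v : Fin n}
    (h : ¬ ((u.1 = i.1 ∧ v.1 = i.1 + 1) ∨ (u.1 = i.1 + 1 ∧ v.1 = i.1))) :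
    adjT n i u < adjT n i v ↔ u < v := by
  rw [Fin.lt_def, Fin.lt_def, adjT_apply_val, adjT_apply_val]
  split_ifs <;> omega

theorem statePerm_succ_lt_iff {t : Fin m} {a b : Fin n}
    (h : ¬ (t ∈ C ∧ crossingSwap n N C t = Equiv.swap a b)) :
    statePerm n N C (t + 1) a < statePerm n N C (t + 1) b ↔
      statePerm n N C t a < statePerm n N C t b := by
  by_cases ht : t ∈ C
  · rw [statePerm_succ, letter_of_mem ht, Equiv.Perm.mul_apply, Equiv.Perm.mul_apply]
    refine adjT_lt_adjT_iff fun hab => h ⟨ht, ?_⟩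
    have hlow (x : Fin n) (hx : (statePerm n N C t x).1 = (N t).1) : pLow n N C t = x := by
      rw [pLow, Equiv.Perm.inv_eq_iff_eq]; exact Fin.ext hx.symm
    have hhigh (x : Fin n) (hx : (statePerm n N C t x).1 = (N t).1 + 1) :
        pHigh n N C t = x := by
      rw [pHigh, Equiv.Perm.inv_eq_iff_eq]; exact Fin.ext hx.symm
    rcases hab with ⟨ha, hb⟩ | ⟨ha, hb⟩
    · rw [crossingSwap, hlow a ha, hhigh b hb]
    · rw [crossingSwap, hlow b hb, hhigh a ha, Equiv.swap_comm]
  · simp [statePerm_succ, letter_of_notMem ht]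

theorem statePerm_lt_iff_of_forall_not_crossing {a b : Fin n} {T : ℕ} (hT : T ≤ m)
    (h : ∀ t : Fin m, t.1 < T → ¬ (t ∈ C ∧ crossingSwap n N C t = Equiv.swap a b)) :
    statePerm n N C T a < statePerm n N C T b ↔ a < b := by
  induction T with
  | zero => rfl
  | succ T ih =>
    rw [statePerm_succ_lt_iff (t := ⟨T, hT⟩) (h _ (by simp))]
    exact ih (by omega) fun t ht => h t (by omega)

theorem exists_crossing (hC : IsArr n N C) {a b : Fin n} (hab : a ≠ b) :
    ∃ t ∈ C, crossingSwap n N C t = Equiv.swap a b := by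
  wlog hlt : a < b generalizing a b
  · obtain ⟨t, ht, hswap⟩ := this hab.symm (lt_of_le_of_ne (not_lt.1 hlt) hab.symm)
    exact ⟨t, ht, hswap.trans (Equiv.swap_comm _ _)⟩
  by_contra hno
  push Not at hno
  have horder := statePerm_lt_iff_of_forall_not_crossing (N := N) (C := C) (a := a) (b := b)
    le_rfl fun t _ ht => hno t ht.1 ht.2
  rw [(isArr_iff.1 hC).2, w0, Fin.revPerm_apply, Fin.revPerm_apply, Fin.rev_lt_rev] at horder
  exact lt_asymm hlt (horder.2 hlt)

theorem crossingSwap_injOn (hC : IsArr n N C) : Set.InjOn (crossingSwap n N C) C := by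
  intro t ht t' ht' heq
  refine Finset.inj_on_of_surj_on_of_card_le (s := C) (t := Finset.powersetCard 2 Finset.univ)
    (fun t _ => (crossingSwap n N C t).support) (fun t _ => ?_) (fun s hs => ?_) ?_ ht ht'
    (congrArg Equiv.Perm.support heq)
  · rw [Finset.mem_powersetCard, crossingSwap, Equiv.Perm.support_swap (pLow_ne_pHigh C t)]
    exact ⟨Finset.subset_univ _, Finset.card_pair (pLow_ne_pHigh C t)⟩
  · obtain ⟨a, b, hab, rfl⟩ := Finset.card_eq_two.1 (Finset.mem_powersetCard.1 hs).2
    obtain ⟨t, ht, hswap⟩ := exists_crossing hC hab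
    exact ⟨t, ht, by rw [hswap, Equiv.Perm.support_swap hab]⟩
  · rw [Finset.card_powersetCard, Finset.card_univ, Fintype.card_fin, hC.1]

theorem statePerm_symmDiff_singleton (C : Finset (Fin m)) (t : Fin m) {T : ℕ} (hT : t.1 < T) :
    statePerm n N (symmDiff C {t}) T = statePerm n N C T * crossingSwap n N C t := by
  induction T, hT using Nat.le_induction with
  | base =>
    have hbefore : statePerm n N (symmDiff C {t}) t = statePerm n N C t :=
      statePerm_congr fun s hs => by simp [Finset.mem_symmDiff, Fin.ne_of_lt hs]
    have hletter : letter n N (symmDiff C {t}) t = letter n N C t * adjT n (N t) := by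
      by_cases ht : t ∈ C <;>
        simp [Finset.mem_symmDiff, ht, letter_of_mem, letter_of_notMem, adjT_mul_self]
    rw [statePerm_succ, statePerm_succ, hbefore, hletter, crossingSwap_eq]
    group
  | succ T hT ih =>
    rw [statePerm_succ, statePerm_succ, ih, ← mul_assoc,
      letter_congr (C := symmDiff C {t}) (C' := C)
        fun _ => by simp [Finset.mem_symmDiff, Fin.ext_iff, show T ≠ t.1 by omega]]

theorem statePerm_symmDiff_pair (C : Finset (Fin m)) {a b : Fin m} (hab : a < b) :
    statePerm n N (symmDiff C {a, b}) m =
      statePerm n N C m * crossingSwap n N C b * crossingSwap n N C a := by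
  have hsplit : symmDiff C {a, b} = symmDiff (symmDiff C {b}) {a} := by
    rw [symmDiff_assoc, (Finset.disjoint_singleton.2 hab.ne').symmDiff_eq_sup,
      Finset.sup_eq_union, Finset.union_comm, Finset.insert_eq]
  have hswap : crossingSwap n N (symmDiff C {b}) a = crossingSwap n N C a :=
    crossingSwap_congr fun s hs => by simp [Finset.mem_symmDiff, (hs.trans hab).ne]
  rw [hsplit, statePerm_symmDiff_singleton _ a a.2, statePerm_symmDiff_singleton _ b b.2, hswap]

theorem card_symmDiff_pair_eq_iff {α : Type*} [DecidableEq α] {s : Finset α} {a b : α}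
    (hab : a ≠ b) : (symmDiff s {a, b}).card = s.card ↔ (a ∈ s ↔ b ∉ s) := by
  by_cases ha : a ∈ s <;> by_cases hb : b ∈ s
  · have hsub : {a, b} ⊆ s := Finset.insert_subset ha (Finset.singleton_subset_iff.2 hb)
    have hle := Finset.card_le_card hsub
    rw [symmDiff_of_ge hsub, Finset.card_sdiff_of_subset hsub]
    rw [Finset.card_pair hab] at hle ⊢
    exact iff_of_false (by omega) (by simp [ha, hb])
  · rw [show symmDiff s {a, b} = insert b (s.erase a) by ext; simp [Finset.mem_symmDiff]; grind,
      Finset.card_insert_of_notMem (by simp [hb]), Finset.card_erase_of_mem ha]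
    have := Finset.card_pos.2 ⟨a, ha⟩
    exact iff_of_true (by omega) (by simp [ha, hb])
  · rw [show symmDiff s {a, b} = insert a (s.erase b) by ext; simp [Finset.mem_symmDiff]; grind,
      Finset.card_insert_of_notMem (by simp [ha]), Finset.card_erase_of_mem hb]
    have := Finset.card_pos.2 ⟨b, hb⟩
    exact iff_of_true (by omega) (by simp [ha, hb])
  · have hdisj : Disjoint s {a, b} := by simp [Finset.disjoint_insert_right, ha, hb]
    rw [hdisj.symmDiff_eq_sup, Finset.sup_eq_union, Finset.card_union_of_disjoint hdisj,
      Finset.card_pair hab]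
    exact iff_of_false (by omega) (by simp [ha, hb])

theorem isArr_symmDiff_pair_iff (hC : IsArr n N C) {a b : Fin m} (hab : a ≠ b) :
    IsArr n N (symmDiff C {a, b}) ↔
      (a ∈ C ↔ b ∉ C) ∧ crossingSwap n N C a = crossingSwap n N C b := by
  wlog hlt : a < b generalizing a b
  · rw [Finset.pair_comm, this hab.symm (lt_of_le_of_ne (not_lt.1 hlt) hab.symm), eq_comm]
    tauto
  rw [isArr_iff, statePerm_symmDiff_pair C hlt, (isArr_iff.1 hC).2, ← hC.1,
    card_symmDiff_pair_eq_iff hab, mul_assoc, mul_eq_left, mul_eq_one_iff_eq_inv,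
    crossingSwap_inv, eq_comm]

theorem exists_mem_crossingSwap_eq (hC : IsArr n N C) (v : Fin m) :
    ∃ w ∈ C, crossingSwap n N C w = crossingSwap n N C v :=
  exists_crossing hC (pLow_ne_pHigh C v)

noncomputable def crossingOf (hC : IsArr n N C) (v : Fin m) : Fin m :=
  (exists_mem_crossingSwap_eq hC v).choose

theorem crossingOf_mem (hC : IsArr n N C) (v : Fin m) : crossingOf hC v ∈ C :=
  (exists_mem_crossingSwap_eq hC v).choose_spec.1

theorem crossingSwap_crossingOf (hC : IsArr n N C) (v : Fin m) :
    crossingSwap n N C (crossingOf hC v) = crossingSwap n N C v :=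
  (exists_mem_crossingSwap_eq hC v).choose_spec.2

theorem eq_crossingOf (hC : IsArr n N C) {v w : Fin m} (hw : w ∈ C)
    (h : crossingSwap n N C w = crossingSwap n N C v) : w = crossingOf hC v :=
  crossingSwap_injOn hC hw (crossingOf_mem hC v) (h.trans (crossingSwap_crossingOf hC v).symm)

theorem crossingOf_ne (hC : IsArr n N C) {v : Fin m} (hv : v ∉ C) : v ≠ crossingOf hC v :=
  fun h => hv (h ▸ crossingOf_mem hC v)

noncomputable def flipAt (hC : IsArr n N C) (v : Fin m) : Finset (Fin m) :=
  symmDiff C {v, crossingOf hC v}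

theorem isArr_flipAt (hC : IsArr n N C) {v : Fin m} (hv : v ∉ C) : IsArr n N (flipAt hC v) :=
  (isArr_symmDiff_pair_iff hC (crossingOf_ne hC hv)).2
    ⟨iff_of_false hv (not_not.2 (crossingOf_mem hC v)), (crossingSwap_crossingOf hC v).symm⟩

theorem eq_of_flipAt_eq (hC : IsArr n N C) {v v' : Fin m} (hv : v ∉ C) (hv' : v' ∉ C)
    (h : flipAt hC v = flipAt hC v') : v = v' := by
  have hmem : v ∈ flipAt hC v' := h ▸ by simp [flipAt, Finset.mem_symmDiff, hv]
  simp only [flipAt, Finset.mem_symmDiff, Finset.mem_insert, Finset.mem_singleton, hv,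
    false_and, false_or] at hmem
  rcases hmem with rfl | rfl
  · rfl
  · exact absurd (crossingOf_mem hC v') hv

theorem flipGraph_adj_iff {C C' : {C : Finset (Fin m) // IsArr n N C}} :
    (flipGraph n N).Adj C C' ↔ ∃ v ∉ C.1, flipAt C.2 v = C'.1 := by
  constructor
  · intro hadj
    obtain ⟨a, b, hab, hdiff⟩ := Finset.card_eq_two.1 hadj
    have hC' : symmDiff C.1 {a, b} = C'.1 := by rw [← hdiff, symmDiff_symmDiff_cancel_left]
    have harr := (isArr_symmDiff_pair_iff C.2 hab).1 (hC' ▸ C'.2)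
    by_cases ha : a ∈ C.1
    · refine ⟨b, harr.1.1 ha, ?_⟩
      rw [flipAt, ← eq_crossingOf C.2 ha harr.2, Finset.pair_comm, hC']
    · refine ⟨a, ha, ?_⟩
      have hb : b ∈ C.1 := not_not.1 (mt harr.1.2 ha)
      rw [flipAt, ← eq_crossingOf C.2 hb harr.2.symm, hC']
  · rintro ⟨v, hv, hflip⟩
    change (symmDiff C.1 C'.1).card = 2
    rw [← hflip, flipAt, symmDiff_symmDiff_cancel_left, Finset.card_pair (crossingOf_ne C.2 hv)]

theorem degree_flipGraph (C : {C : Finset (Fin m) // IsArr n N C}) :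
    (flipGraph n N).degree C = m - n.choose 2 := by
  have hcontacts : C.1ᶜ.card = m - n.choose 2 := by
    rw [Finset.card_compl, Fintype.card_fin, C.2.1]
  rw [← SimpleGraph.card_neighborFinset_eq_degree, ← hcontacts]
  symm
  refine Finset.card_bij (fun v hv => ⟨flipAt C.2 v, isArr_flipAt C.2 (Finset.mem_compl.1 hv)⟩)
    (fun v hv => ?_) (fun v hv v' hv' h => ?_) (fun C' hC' => ?_)
  · rw [SimpleGraph.mem_neighborFinset, flipGraph_adj_iff]
    exact ⟨v, Finset.mem_compl.1 hv, rfl⟩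
  · exact eq_of_flipAt_eq C.2 (Finset.mem_compl.1 hv) (Finset.mem_compl.1 hv')
      (congrArg Subtype.val h)
  · rw [SimpleGraph.mem_neighborFinset] at hC'
    obtain ⟨v, hv, hflip⟩ := flipGraph_adj_iff.1 hC'
    exact ⟨v, Finset.mem_compl.2 hv, Subtype.ext hflip⟩

theorem exists_adj_agree_le (C C' : {C : Finset (Fin m) // IsArr n N C}) {k : Fin m}
    (hagree : ∀ t < k, t ∈ C.1 ↔ t ∈ C'.1) (hk : k ∉ C.1) (hk' : k ∈ C'.1) :
    ∃ C₁, (flipGraph n N).Adj C C₁ ∧ ∀ t ≤ k, t ∈ C₁.1 ↔ t ∈ C'.1 := by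
  -- the pseudolines meeting at `k` cross at `k` in `C'`, so not before `k`
  have hkw : k < crossingOf C.2 k := by
    refine lt_of_le_of_ne (not_lt.1 fun hwk => crossingOf_ne C.2 hk ?_) (crossingOf_ne C.2 hk)
    refine crossingSwap_injOn C'.2 hk' ((hagree _ hwk).1 (crossingOf_mem C.2 k)) ?_
    rw [← crossingSwap_congr hagree, ← crossingSwap_congr fun s hs => hagree s (hs.trans hwk),
      crossingSwap_crossingOf]
  refine ⟨⟨flipAt C.2 k, isArr_flipAt C.2 hk⟩, flipGraph_adj_iff.2 ⟨k, hk, rfl⟩, fun t ht => ?_⟩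
  rcases ht.lt_or_eq with ht | rfl
  · simp [flipAt, Finset.mem_symmDiff, ht.ne, (ht.trans hkw).ne, hagree t ht]
  · simp [flipAt, Finset.mem_symmDiff, hk, hk']

theorem flipGraph_reachable_of_agree (d : ℕ) (C C' : {C : Finset (Fin m) // IsArr n N C})
    (h : ∀ t : Fin m, t.1 + d < m → (t ∈ C.1 ↔ t ∈ C'.1)) : (flipGraph n N).Reachable C C' := by
  induction d generalizing C C' with
  | zero => rw [Subtype.ext (Finset.ext fun t => h t (by omega))]
  | succ d ih =>
    by_cases hd : d < m
    swap
    · exact ih C C' fun t ht => by omega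
    obtain ⟨k, hkd⟩ : ∃ k : Fin m, k.1 + d + 1 = m :=
      ⟨⟨m - 1 - d, by omega⟩, by simp only; omega⟩
    have hle (t : Fin m) (ht : t.1 + d < m) : t ≤ k := by rw [Fin.le_def]; omega
    have hagree (t : Fin m) (ht : t < k) : t ∈ C.1 ↔ t ∈ C'.1 :=
      h t (by rw [Fin.lt_def] at ht; omega)
    by_cases hkk : k ∈ C.1 ↔ k ∈ C'.1
    · refine ih C C' fun t ht => ?_
      rcases (hle t ht).lt_or_eq with ht' | rfl
      exacts [hagree t ht', hkk]
    by_cases hk : k ∈ C.1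
    · obtain ⟨C₁, hadj, hC₁⟩ :=
        exists_adj_agree_le C' C (fun t ht => (hagree t ht).symm) (by tauto) hk
      exact (ih C C₁ fun t ht => (hC₁ t (hle t ht)).symm).trans hadj.symm.reachable
    · obtain ⟨C₁, hadj, hC₁⟩ := exists_adj_agree_le C C' hagree hk (by tauto)
      exact hadj.reachable.trans (ih C₁ C' fun t ht => hC₁ t (hle t ht))

end Flips

/-- Let `N` be a sorting network with `n` levels and `m` commutators.
Then the flip graph `G(N)` is `(m - n(n-1)/2)`-regular and connected. -/
theorem flipGraph_connected_and_regular (n m : ℕ) (N : Fin m → Fin (n - 1))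
    (hsort : ∃ C, IsArr n N C) :
    (flipGraph n N).Connected ∧ (flipGraph n N).IsRegularOfDegree (m - n.choose 2) := by
  obtain ⟨C, hC⟩ := hsort
  refine ⟨(SimpleGraph.connected_iff _).2 ⟨fun C C' => ?_, ⟨⟨C, hC⟩⟩⟩, degree_flipGraph⟩
  exact flipGraph_reachable_of_agree m C C' fun t ht => by omega

end BrickP
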